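/- arXiv:2210.17499 — 2 statements merged into one kernel-verified Lean document; each statement's English description precedes it below -/
import Mathlib

section
/- Let $\Omega\subset\mathbb{R}^2$ be open, let $A:\Omega\to M_2(\mathbb{R})$ be $C^1$ with $\det A(x) \ne 0$ for all $x$, and let $u,\tilde{u}\in C^2(\Omega)$ satisfy $J\nabla\tilde{u} = A\nabla u$ pointwise, where $J=\begin{pmatrix}0 & -1\\ 1 & 0\end{pmatrix}$. If $\mathrm{div}(A\nabla u) = 0$ in $\Omega$, then $\mathrm{div}(\tilde{A}\nabla\tilde{u}) = 0$ in $\Omega$, where $\tilde{A} = A^{t}/\det A$. -/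
/-!
By the conjugate relation, `Ã ∇ũ = Aᵀ J⁻¹ A ∇u / det A`, and for a `2 × 2` matrix `Aᵀ J A = (det A) J`,
so `Ã ∇ũ = -J ∇u = (∂₂u, -∂₁u)`. Its divergence is `∂₁∂₂u - ∂₂∂₁u = 0` by the symmetry of second
derivatives.
-/

noncomputable section

open Matrix

/-- Partial derivative in the `i`-th coordinate direction. -/
def pd {n : ℕ} (i : Fin n) (f : EuclideanSpace ℝ (Fin n) → ℝ)
    (x : EuclideanSpace ℝ (Fin n)) : ℝ :=
  fderiv ℝ f x (EuclideanSpace.single i 1)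

open Filter Topology

section PartialDerivatives

variable {n : ℕ} {f g : EuclideanSpace ℝ (Fin n) → ℝ} {x : EuclideanSpace ℝ (Fin n)}

lemma pd_congr_of_eventuallyEq (i : Fin n) (h : f =ᶠ[𝓝 x] g) : pd i f x = pd i g x := by
  rw [pd, pd, h.fderiv_eq]

lemma pd_neg (i : Fin n) : pd i (fun y => -f y) x = -pd i f x := by
  rw [pd, pd, fderiv_fun_neg, _root_.neg_apply]

lemma pd_pd_eq_fderiv_fderiv (i j : Fin n) (hf : DifferentiableAt ℝ (fderiv ℝ f) x) :
    pd i (fun y => pd j f y) x =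
      fderiv ℝ (fderiv ℝ f) x (EuclideanSpace.single i 1) (EuclideanSpace.single j 1) := by
  simp only [pd]
  rw [fderiv_clm_apply hf (differentiableAt_const _)]
  simp

lemma pd_pd_comm (i j : Fin n) (hf : ContDiffAt ℝ 2 f x) :
    pd i (fun y => pd j f y) x = pd j (fun y => pd i f y) x := by
  have hd : DifferentiableAt ℝ (fderiv ℝ f) x :=
    (hf.fderiv_right (m := 1) (by norm_num)).differentiableAt one_ne_zero
  rw [pd_pd_eq_fderiv_fderiv i j hd, pd_pd_eq_fderiv_fderiv j i hd]
  exact hf.isSymmSndFDerivAt (by norm_num) _ _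

end PartialDerivatives

lemma sum_pd_rotated_gradient_eq_zero {u : EuclideanSpace ℝ (Fin 2) → ℝ}
    {x : EuclideanSpace ℝ (Fin 2)} (hu : ContDiffAt ℝ 2 u x) :
    ∑ i, pd i (fun y => ![pd 1 u y, -pd 0 u y] i) x = 0 := by
  simp only [Fin.sum_univ_two, Fin.isValue, cons_val_zero, cons_val_one, cons_val_fin_one]
  rw [pd_neg, pd_pd_comm 0 1 hu, add_neg_cancel]

lemma transpose_mulVec_div_det_eq_of_J_mulVec_eq {K : Type*} [Field K]
    {M : Matrix (Fin 2) (Fin 2) K} (hM : M.det ≠ 0) {p q : Fin 2 → K}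
    (h : !![0, -1; 1, 0] *ᵥ q = M *ᵥ p) (i : Fin 2) :
    ∑ j, M j i / M.det * q j = ![p 1, -p 0] i := by
  have h0 := congrFun h 0
  have h1 := congrFun h 1
  simp only [mulVec, dotProduct, Fin.sum_univ_two, of_apply, cons_val', cons_val_zero,
    cons_val_one, empty_val', cons_val_fin_one, zero_mul, one_mul, zero_add, add_zero,
    neg_one_mul] at h0 h1
  rw [Fin.sum_univ_two]
  fin_cases i <;> simp only [Fin.zero_eta, Fin.mk_one, cons_val_zero, cons_val_one,
    cons_val_fin_one]
  · field_simp
    linear_combination M 0 0 * h1 - M 1 0 * h0 - p 1 * det_fin_two M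
  · field_simp
    linear_combination M 0 1 * h1 - M 1 1 * h0 + p 0 * det_fin_two M

theorem conjugate_solution_general {Ω : Set (EuclideanSpace ℝ (Fin 2))} (hΩ : IsOpen Ω)
    (A : EuclideanSpace ℝ (Fin 2) → Matrix (Fin 2) (Fin 2) ℝ)
    (hdet : ∀ x ∈ Ω, (A x).det ≠ 0)
    (u tu : EuclideanSpace ℝ (Fin 2) → ℝ)
    (hu : ContDiffOn ℝ 2 u Ω)
    (hconj : ∀ x ∈ Ω,
      (!![0, -1; 1, 0] : Matrix (Fin 2) (Fin 2) ℝ).mulVec (fun j => pd j tu x)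
        = (A x).mulVec (fun j => pd j u x)) :
    ∀ x ∈ Ω, ∑ i, pd i (fun y => ∑ j, (A y j i / (A y).det) * pd j tu y) x = 0 := by
  intro x hx
  have hΩx : Ω ∈ 𝓝 x := hΩ.mem_nhds hx
  have hrot : ∀ i, (fun y => ∑ j, (A y j i / (A y).det) * pd j tu y)
      =ᶠ[𝓝 x] fun y => ![pd 1 u y, -pd 0 u y] i := fun i =>
    eventually_of_mem hΩx fun y hy =>
      transpose_mulVec_div_det_eq_of_J_mulVec_eq (hdet y hy) (hconj y hy) i
  simp only [pd_congr_of_eventuallyEq _ (hrot _)]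
  exact sum_pd_rotated_gradient_eq_zero ((hu x hx).contDiffAt hΩx)

/-- Kenig–Rule conjugate identity in two dimensions: if `J ∇ũ = A ∇u` and
`div(A ∇u) = 0` in an open set `Ω`, then `div(Ã ∇ũ) = 0` in `Ω` where `Ã = Aᵀ / det A`. -/
theorem conjugate_solution {Ω : Set (EuclideanSpace ℝ (Fin 2))} (hΩ : IsOpen Ω)
    (A : EuclideanSpace ℝ (Fin 2) → Matrix (Fin 2) (Fin 2) ℝ)
    (hA : ∀ i j, ContDiffOn ℝ 1 (fun x => A x i j) Ω)
    (hdet : ∀ x ∈ Ω, (A x).det ≠ 0)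
    (u tu : EuclideanSpace ℝ (Fin 2) → ℝ)
    (hu : ContDiffOn ℝ 2 u Ω) (htu : ContDiffOn ℝ 2 tu Ω)
    (hconj : ∀ x ∈ Ω,
      (!![0, -1; 1, 0] : Matrix (Fin 2) (Fin 2) ℝ).mulVec (fun j => pd j tu x)
        = (A x).mulVec (fun j => pd j u x))
    (hsol : ∀ x ∈ Ω, ∑ i, pd i (fun y => ∑ j, A y i j * pd j u y) x = 0) :
    ∀ x ∈ Ω, ∑ i, pd i (fun y => ∑ j, (A y j i / (A y).det) * pd j tu y) x = 0 :=
  conjugate_solution_general hΩ A hdet u tu hu hconj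
end
end

section
/- Let $(X,\mu)$ be a measure space and $N, G: X \to [0,\infty)$ measurable with $\int N^p\,d\mu < \infty$ for some $0<p<\infty$. Suppose there exist $\varepsilon\in(0,1)$ and $K\ge 0$ such that for all $\nu>0$: $\mu(\{N>\nu,\ G\le \nu\}) \le \varepsilon\,\mu(\{N>\nu/32\})$, with $32^p\,\varepsilon \le 1/2$. Then $\int_X N^p\,d\mu \le 2\cdot 32^p \int_X G^p\,d\mu$. -/
/-!
Splitting `{N > ν}` along `{G ≤ ν}` gives the distributional inequality
`μ{N > ν} ≤ ε μ{32 N > ν} + μ{G > ν}`. Integrating it against `p ν^(p-1) dν` (layer cake) yields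
`∫ N^p ≤ ε 32^p ∫ N^p + ∫ G^p`, and since `ε 32^p ≤ 1/2` and `∫ N^p < ∞`, the first term on the
right can be absorbed into the left.
-/

open MeasureTheory

open scoped ENNReal

lemma measure_lt_le_measure_lt_and_le_add {α : Type*} [MeasurableSpace α] (μ : Measure α)
    (f g : α → ℝ) (t : ℝ) :
    μ {x | t < f x} ≤ μ {x | t < f x ∧ g x ≤ t} + μ {x | t < g x} := by
  refine (measure_mono fun x hx => ?_).trans (measure_union_le _ _)
  by_cases hgx : g x ≤ t
  · exact Or.inl ⟨hx, hgx⟩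
  · exact Or.inr (not_le.mp hgx)

lemma lintegral_rpow_le_of_measure_lt_le_add {α : Type*} [MeasurableSpace α] (μ : Measure α)
    {f g h : α → ℝ} (hf₀ : 0 ≤ᵐ[μ] f) (hf : AEMeasurable f μ)
    (hg₀ : 0 ≤ᵐ[μ] g) (hg : AEMeasurable g μ) (hh₀ : 0 ≤ᵐ[μ] h) (hh : AEMeasurable h μ)
    {p : ℝ} (hp : 0 < p) (c : ℝ≥0∞)
    (hdist : ∀ t > 0, μ {x | t < f x} ≤ c * μ {x | t < g x} + μ {x | t < h x}) :
    ∫⁻ x, ENNReal.ofReal (f x ^ p) ∂μ ≤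
      c * ∫⁻ x, ENNReal.ofReal (g x ^ p) ∂μ + ∫⁻ x, ENNReal.ofReal (h x ^ p) ∂μ := by
  have hmeas : Measurable fun t : ℝ => μ {x | t < g x} :=
    Antitone.measurable fun s t hst => measure_mono fun x hx => hst.trans_lt hx
  rw [lintegral_rpow_eq_lintegral_meas_lt_mul μ hf₀ hf hp,
    lintegral_rpow_eq_lintegral_meas_lt_mul μ hg₀ hg hp,
    lintegral_rpow_eq_lintegral_meas_lt_mul μ hh₀ hh hp, mul_left_comm, ← mul_add]
  gcongr ENNReal.ofReal p * ?_
  have hmeas' : Measurable fun t : ℝ => μ {x | t < g x} * ENNReal.ofReal (t ^ (p - 1)) :=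
    hmeas.mul (by fun_prop)
  rw [← lintegral_const_mul _ hmeas', ← lintegral_add_left (hmeas'.const_mul c)]
  refine setLIntegral_mono' measurableSet_Ioi fun t ht => ?_
  calc μ {x | t < f x} * ENNReal.ofReal (t ^ (p - 1))
      ≤ (c * μ {x | t < g x} + μ {x | t < h x}) * ENNReal.ofReal (t ^ (p - 1)) := by
        gcongr; exact hdist t ht
    _ = _ := by ring

lemma lintegral_ofReal_const_mul_rpow {α : Type*} [MeasurableSpace α] (μ : Measure α)
    {f : α → ℝ} (hf : ∀ x, 0 ≤ f x) {a : ℝ} (ha : 0 ≤ a) (p : ℝ) :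
    ∫⁻ x, ENNReal.ofReal ((a * f x) ^ p) ∂μ =
      ENNReal.ofReal (a ^ p) * ∫⁻ x, ENNReal.ofReal (f x ^ p) ∂μ := by
  rw [← lintegral_const_mul' _ _ ENNReal.ofReal_ne_top]
  congr 1 with x
  rw [Real.mul_rpow ha (hf x), ENNReal.ofReal_mul (by positivity)]

lemma ENNReal.le_two_mul_of_le_half_mul_add {a b : ℝ≥0∞} (ha : a ≠ ∞)
    (h : a ≤ 2⁻¹ * a + b) : a ≤ 2 * b := by
  have hhalf : 2⁻¹ * a ≠ ∞ := ENNReal.mul_ne_top (by simp) ha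
  have : 2⁻¹ * a ≤ b := by
    rwa [← ENNReal.add_le_add_iff_left hhalf, ← add_mul, ENNReal.inv_two_add_inv_two, one_mul]
  calc a = 2 * (2⁻¹ * a) := by
        rw [← mul_assoc, ENNReal.mul_inv_cancel two_ne_zero ENNReal.ofNat_ne_top, one_mul]
    _ ≤ 2 * b := by gcongr

theorem good_lambda_to_Lp_general {X : Type*} [MeasurableSpace X] (μ : Measure X)
    (N G : X → ℝ) (hN : Measurable N) (hG : Measurable G)
    (hNpos : ∀ x, 0 ≤ N x) (hGpos : ∀ x, 0 ≤ G x)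
    (p : ℝ) (hp : 0 < p)
    (hfin : ∫⁻ x, ENNReal.ofReal (N x ^ p) ∂μ < ⊤)
    (ε : ℝ)
    (hgl : ∀ ν : ℝ, 0 < ν →
      μ {x | ν < N x ∧ G x ≤ ν} ≤ ENNReal.ofReal ε * μ {x | ν / 32 < N x})
    (hsmall : 32 ^ p * ε ≤ 1 / 2) :
    ∫⁻ x, ENNReal.ofReal (N x ^ p) ∂μ ≤
      ENNReal.ofReal (2 * 32 ^ p) * ∫⁻ x, ENNReal.ofReal (G x ^ p) ∂μ := by
  have hdist : ∀ t > 0,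
      μ {x | t < N x} ≤ ENNReal.ofReal ε * μ {x | t < 32 * N x} + μ {x | t < G x} := by
    intro t ht
    have hscale : {x | t / 32 < N x} = {x | t < 32 * N x} := by
      ext x
      exact div_lt_iff₀' (by norm_num : (0 : ℝ) < 32)
    calc μ {x | t < N x} ≤ μ {x | t < N x ∧ G x ≤ t} + μ {x | t < G x} :=
          measure_lt_le_measure_lt_and_le_add μ N G t
      _ ≤ _ := by grw [hgl t ht, hscale]
  have hLp := lintegral_rpow_le_of_measure_lt_le_add μ (ae_of_all _ hNpos) hN.aemeasurable
    (ae_of_all _ fun x => mul_nonneg (by norm_num) (hNpos x)) (hN.const_mul 32).aemeasurable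
    (ae_of_all _ hGpos) hG.aemeasurable hp _ hdist
  rw [lintegral_ofReal_const_mul_rpow μ hNpos (by norm_num), ← mul_assoc,
    ← ENNReal.ofReal_mul' (by positivity)] at hLp
  have hhalf : ENNReal.ofReal (ε * 32 ^ p) ≤ 2⁻¹ := by
    calc ENNReal.ofReal (ε * 32 ^ p) ≤ ENNReal.ofReal 2⁻¹ :=
          ENNReal.ofReal_le_ofReal (by linarith)
      _ = 2⁻¹ := by rw [ENNReal.ofReal_inv_of_pos two_pos, ENNReal.ofReal_ofNat]
  refine (ENNReal.le_two_mul_of_le_half_mul_add hfin.ne (hLp.trans (by gcongr))).trans ?_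
  have h32 : (1 : ℝ) ≤ 32 ^ p := Real.one_le_rpow (by norm_num) hp.le
  gcongr
  rw [← ENNReal.ofReal_ofNat]
  exact ENNReal.ofReal_le_ofReal (by nlinarith)

/-- The abstract good-λ mechanism: a level-set estimate
`μ{N > ν, G ≤ ν} ≤ ε μ{N > ν/32}` with `32^p ε ≤ 1/2` and `∫ N^p < ∞` yields
`∫ N^p ≤ 2 · 32^p ∫ G^p`. -/
theorem good_lambda_to_Lp {X : Type*} [MeasurableSpace X] (μ : Measure X)
    (N G : X → ℝ) (hN : Measurable N) (hG : Measurable G)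
    (hNpos : ∀ x, 0 ≤ N x) (hGpos : ∀ x, 0 ≤ G x)
    (p : ℝ) (hp : 0 < p)
    (hfin : ∫⁻ x, ENNReal.ofReal (N x ^ p) ∂μ < ⊤)
    (ε K : ℝ) (hε : 0 < ε) (hε1 : ε < 1) (hK : 0 ≤ K)
    (hgl : ∀ ν : ℝ, 0 < ν →
      μ {x | ν < N x ∧ G x ≤ ν} ≤ ENNReal.ofReal ε * μ {x | ν / 32 < N x})
    (hsmall : 32 ^ p * ε ≤ 1 / 2) :
    ∫⁻ x, ENNReal.ofReal (N x ^ p) ∂μ ≤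
      ENNReal.ofReal (2 * 32 ^ p) * ∫⁻ x, ENNReal.ofReal (G x ^ p) ∂μ :=
  good_lambda_to_Lp_general μ N G hN hG hNpos hGpos p hp hfin ε hgl hsmall
end
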